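/- Let L be a non-discrete, compactly generated, topologically simple t.d.l.c. group (Hausdorff, locally compact, totally disconnected). Then the virtual center of L is trivial: VZ(L) = {1}. Consequently, for every open compact subgroup G of L one has VZ(G) = {1} (where VZ(G) is computed inside G). -/

import Mathlib

/-!
The virtual center is a normal subgroup, so by topological simplicity its closure is trivial or
everything. Suppose it is dense. Choose a compact open subgroup `U` (van Dantzig) missing some
`x ≠ 1`. A compact generating set is covered by finitely many cosets `f U` with `f` in a finite
subset `F` of the virtual center, so `F ∪ U` generates. Since `U` is compact, the open subgroup
`U ∩ C(F)` contains an open subgroup `N` normal in `U`; `N` is centralized by `F`, hence normal.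
Being open, `N` is closed and, as `G` is not discrete, nontrivial; so `N = G ⊆ U`, contradicting
`x ∉ U`. For an open subgroup, the virtual center embeds into the ambient one.
-/

open scoped Pointwise
open Set Topology

theorem Dense.exists_finite_subset_mul {G : Type*} [Group G] [TopologicalSpace G]
    [IsTopologicalGroup G] {D K U : Set G} (hD : Dense D) (hK : IsCompact K) (hU : IsOpen U)
    (hU₀ : U.Nonempty) : ∃ F ⊆ D, F.Finite ∧ K ⊆ F * U := by
  have hDU : D * U = univ := by rw [← hU.closure_mul, hD.closure_eq, univ_mul hU₀]
  obtain ⟨F, hFD, hF, hKF⟩ := hK.elim_finite_subcover_image (b := D) (c := fun d => (d * ·) '' U)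
    (fun d _ => isOpenMap_mul_left d U hU) (by rw [iUnion_mul_left_image, hDU]; exact subset_univ K)
  exact ⟨F, hFD, hF, by rwa [iUnion_mul_left_image] at hKF⟩

namespace Subgroup

variable {G : Type*} [Group G] [TopologicalSpace G] [IsTopologicalGroup G]

variable (G) in
def virtualCenter : Subgroup G where
  carrier := {g | IsOpen (centralizer {g} : Set G)}
  one_mem' := isOpen_mono (H₁ := ⊤) (fun x _ => by simp [mem_centralizer_singleton_iff]) (by simp)
  mul_mem' {a b} ha hb := by
    refine isOpen_mono (H₁ := centralizer {a} ⊓ centralizer {b}) (fun x hx => ?_) (ha.inter hb)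
    simp only [mem_inf, mem_centralizer_singleton_iff] at hx ⊢
    rw [← mul_assoc, hx.1, mul_assoc, hx.2, mul_assoc]
  inv_mem' {a} ha := isOpen_mono (fun x hx => by
    rw [mem_centralizer_singleton_iff] at hx ⊢
    exact (Commute.inv_right hx).eq) ha

@[simp]
theorem mem_virtualCenter {g : G} : g ∈ virtualCenter G ↔ IsOpen (centralizer {g} : Set G) :=
  Iff.rfl

instance virtualCenter_normal : (virtualCenter G).Normal where
  conj_mem g hg x := by
    refine isOpen_mono (H₁ := (centralizer {g}).comap (MulAut.conj x⁻¹).toMonoidHom)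
      (fun y hy => ?_) (hg.preimage (IsTopologicalGroup.continuous_conj x⁻¹))
    simp only [mem_comap, mem_centralizer_singleton_iff, MulEquiv.coe_toMonoidHom,
      MulAut.conj_apply, inv_inv] at hy ⊢
    calc y * (x * g * x⁻¹) = x * (x⁻¹ * y * x * g) * x⁻¹ := by group
      _ = x * g * x⁻¹ * y := by rw [hy]; group

theorem isOpen_centralizer_of_subset_virtualCenter {F : Set G} (hF : F.Finite)
    (hFZ : F ⊆ virtualCenter G) : IsOpen (centralizer F : Set G) := by
  rw [centralizer_eq_iInf]
  simp only [coe_iInf]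
  exact hF.isOpen_biInter fun g hg => hFZ hg

theorem map_subtype_virtualCenter_le {H : Subgroup G} (hH : IsOpen (H : Set G)) :
    (virtualCenter H).map H.subtype ≤ virtualCenter G := by
  rintro _ ⟨g, hg, rfl⟩
  refine isOpen_mono ((map_centralizer_le_centralizer_image {g} H.subtype).trans ?_) ?_
  · simp
  · rw [coe_map]; exact hH.isOpenMap_subtype_val _ hg

-- van Dantzig's theorem, via the stabilizer of a compact clopen neighbourhood of `1`.
theorem exists_isOpen_isCompact_subgroup_subset [T2Space G] [LocallyCompactSpace G]
    [TotallyDisconnectedSpace G] {O : Set G} (hO : O ∈ 𝓝 1) :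
    ∃ U : Subgroup G, IsOpen (U : Set G) ∧ IsCompact (U : Set G) ∧ (U : Set G) ⊆ O := by
  obtain ⟨s, hs, hsO, hsc⟩ := local_compact_nhds hO
  obtain ⟨W, hW, h1W, hWs⟩ := loc_compact_Haus_tot_disc_of_zero_dim.mem_nhds_iff.1 hs
  have hWc : IsCompact W := hsc.of_isClosed_subset hW.isClosed hWs
  obtain ⟨V, hV, hVW⟩ := compact_open_separated_mul_left hWc hW.isOpen subset_rfl
  have hVW' : ∀ v ∈ V, v • W ⊆ W := by
    rintro v hv _ ⟨w, hw, rfl⟩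
    exact hVW (Set.mul_mem_mul hv hw)
  let U := MulAction.stabilizer G W
  have hUW : (U : Set G) ⊆ W := fun g hg => by
    simpa using (MulAction.mem_stabilizer_iff.1 hg).le (Set.smul_mem_smul_set (a := g) h1W)
  have hU : (U : Set G) ∈ 𝓝 1 := by
    refine Filter.mem_of_superset (Filter.inter_mem hV (inv_mem_nhds_one G hV)) fun v hv => ?_
    refine (hVW' v hv.1).antisymm ?_
    simpa using Set.smul_set_subset_iff_subset_inv_smul_set.1 (hVW' v⁻¹ hv.2)
  have hUo : IsOpen (U : Set G) := U.isOpen_of_mem_nhds hU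
  exact ⟨U, hUo, hWc.of_isClosed_subset (U.isClosed_of_isOpen hUo) hUW, hUW.trans (hWs.trans hsO)⟩

theorem exists_isOpen_normalizedBy_le_inf {U V : Subgroup G} (hUo : IsOpen (U : Set G))
    (hUc : IsCompact (U : Set G)) (hV : IsOpen (V : Set G)) :
    ∃ N : Subgroup G, IsOpen (N : Set G) ∧ N ≤ U ⊓ V ∧ U ≤ normalizer (N : Set G) := by
  have : CompactSpace U := isCompact_iff_compactSpace.1 hUc
  have hVU : IsOpen (V.subgroupOf U : Set U) := hV.preimage continuous_subtype_val
  obtain ⟨N, hN⟩ := IsTopologicalGroup.exist_openNormalSubgroup_sub_clopen_nhds_of_one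
    ⟨(V.subgroupOf U).isClosed_of_isOpen hVU, hVU⟩ (V.subgroupOf U).one_mem
  refine ⟨N.toSubgroup.map U.subtype, ?_, ?_, ?_⟩
  · rw [coe_map]
    exact hUo.isOpenMap_subtype_val _ N.isOpen
  · rintro _ ⟨x, hx, rfl⟩
    exact ⟨x.2, hN hx⟩
  · rw [← normal_subgroupOf_iff_le_normalizer (map_subtype_le _), subgroupOf,
      comap_map_eq_self_of_injective U.subtype_injective]
    infer_instance

theorem exists_isOpen_normal_le_of_dense_virtualCenter (hZ : Dense (virtualCenter G : Set G))
    (hcg : ∃ K : Set G, IsCompact K ∧ Subgroup.closure K = ⊤) {U : Subgroup G}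
    (hUo : IsOpen (U : Set G)) (hUc : IsCompact (U : Set G)) :
    ∃ N : Subgroup G, N.Normal ∧ IsOpen (N : Set G) ∧ N ≤ U := by
  obtain ⟨K, hK, hKgen⟩ := hcg
  obtain ⟨F, hFZ, hF, hKFU⟩ := hZ.exists_finite_subset_mul hK hUo ⟨1, U.one_mem⟩
  obtain ⟨N, hNo, hNle, hUN⟩ :=
    exists_isOpen_normalizedBy_le_inf hUo hUc (isOpen_centralizer_of_subset_virtualCenter hF hFZ)
  have hFN : F ⊆ normalizer (N : Set G) := fun f hf => centralizer_le_normalizer _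
    (mem_centralizer_iff.2 fun n hn => (mem_centralizer_iff.1 (hNle hn).2 f hf).symm)
  refine ⟨N, normalizer_eq_top_iff.1 ?_, hNo, hNle.trans inf_le_left⟩
  rw [eq_top_iff, ← hKgen, closure_le]
  intro k hk
  obtain ⟨f, hf, u, hu, rfl⟩ := hKFU hk
  exact mul_mem (hFN hf) (hUN hu)

theorem virtualCenter_eq_bot [T2Space G] [LocallyCompactSpace G] [TotallyDisconnectedSpace G]
    [Nontrivial G] (hnd : ¬ DiscreteTopology G)
    (hsimple : ∀ N : Subgroup G, N.Normal → IsClosed (N : Set G) → N = ⊥ ∨ N = ⊤)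
    (hcg : ∃ K : Set G, IsCompact K ∧ Subgroup.closure K = ⊤) : virtualCenter G = ⊥ := by
  rcases hsimple _ (is_normal_topologicalClosure (virtualCenter G))
      (isClosed_topologicalClosure _) with h | h
  · exact le_bot_iff.1 (h ▸ le_topologicalClosure _)
  · exfalso
    obtain ⟨x, hx⟩ := exists_ne (1 : G)
    obtain ⟨U, hUo, hUc, hxU⟩ :=
      exists_isOpen_isCompact_subgroup_subset (isOpen_compl_singleton.mem_nhds hx.symm)
    have hZ : Dense (virtualCenter G : Set G) := by
      rw [dense_iff_closure_eq, ← topologicalClosure_coe, h, coe_top]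
    obtain ⟨N, hN, hNo, hNU⟩ := exists_isOpen_normal_le_of_dense_virtualCenter hZ hcg hUo hUc
    rcases hsimple N hN (N.isClosed_of_isOpen hNo) with rfl | rfl
    · exact hnd (discreteTopology_of_isOpen_singleton_one (by simpa using hNo))
    · exact hxU (hNU (mem_top x)) rfl

end Subgroup

/-- Theorem 4.3: A non-discrete, compactly generated, topologically simple t.d.l.c. group
has trivial virtual center; consequently every open compact subgroup has trivial
virtual center. -/
theorem stmt_4 {L : Type*} [Group L] [TopologicalSpace L] [IsTopologicalGroup L]
    [T2Space L] [LocallyCompactSpace L] [TotallyDisconnectedSpace L]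
    [Nontrivial L]
    (hnd : ¬ DiscreteTopology L)
    (hsimple : ∀ N : Subgroup L, N.Normal → IsClosed (N : Set L) → N = ⊥ ∨ N = ⊤)
    (hcg : ∃ K : Set L, IsCompact K ∧ Subgroup.closure K = ⊤) :
    (∀ g : L, IsOpen ((Subgroup.centralizer {g} : Subgroup L) : Set L) → g = 1) ∧
      ∀ G : Subgroup L, IsOpen (G : Set L) → IsCompact (G : Set L) →
        ∀ g : G, IsOpen ((Subgroup.centralizer {g} : Subgroup G) : Set G) → g = 1 := by
  have hZ := Subgroup.virtualCenter_eq_bot hnd hsimple hcg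
  refine ⟨fun g hg => Subgroup.mem_bot.1 (hZ ▸ Subgroup.mem_virtualCenter.2 hg),
    fun G hG _ g hg => ?_⟩
  have : (g : L) ∈ Subgroup.virtualCenter L :=
    Subgroup.map_subtype_virtualCenter_le hG ⟨g, hg, rfl⟩
  rw [hZ, Subgroup.mem_bot] at this
  exact_mod_cast this
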